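/- For all integers r ≥ m ≥ 0, the identity Σ_{t=0}^{r−m} B_t · C(r,t) · S(r−t, m) = Σ_{i=m}^{r} C(i,m) · S(r,i) holds, where C(a,b) denotes the binomial coefficient. -/

import Mathlib

/-- Stirling numbers of the second kind. -/
def stirling : ℕ → ℕ → ℕ
  | 0, 0 => 1
  | 0, _ + 1 => 0
  | _ + 1, 0 => 0
  | n + 1, k + 1 => (k + 1) * stirling n (k + 1) + stirling n k

/-- The `t`-th Bell number, `B_t = Σ_{q=0}^{t} S(t,q)`. -/
def bell (t : ℕ) : ℕ := ∑ q ∈ Finset.range (t + 1), stirling t q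

/-!
Expanding `B_t = ∑_q S(t,q)` and exchanging the sums reduces the identity to the convolution
`∑_t C(n,t) S(t,p) S(n-t,q) = C(p+q,p) S(n,p+q)`: both sides count partitions of an `n`-set into
`p + q` blocks of which `p` are marked (the marked blocks cover `t` of the points). The convolution
follows by induction on `n` from the recurrence of `S`, after splitting `C(n+1,t)` by Pascal's rule.
-/

open Finset

theorem stirling_eq_stirlingSecond : stirling = Nat.stirlingSecond := by
  funext n k
  induction n generalizing k with
  | zero => cases k <;> rfl
  | succ n ih => cases k <;> simp [stirling, Nat.stirlingSecond_succ_succ, ih]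

namespace Nat

theorem sum_antidiagonal_choose_mul_stirlingSecond_mul_stirlingSecond (n p q : ℕ) :
    ∑ ij ∈ antidiagonal n, n.choose ij.1 * (stirlingSecond ij.1 p * stirlingSecond ij.2 q) =
      (p + q).choose p * stirlingSecond n (p + q) := by
  induction n generalizing p q with
  | zero => rcases p with _ | p <;> rcases q with _ | q <;> simp [stirlingSecond_eq_zero_of_lt]
  | succ n ih =>
    rcases p with _ | p
    · rw [Finset.Nat.sum_antidiagonal_succ]; simp
    rcases q with _ | q
    · rw [Finset.Nat.sum_antidiagonal_succ']; simp
    have split : ∀ ij ∈ antidiagonal n,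
        n.choose ij.1 * (stirlingSecond ij.1 (p + 1) * stirlingSecond (ij.2 + 1) (q + 1)) +
          n.choose ij.2 * (stirlingSecond (ij.1 + 1) (p + 1) * stirlingSecond ij.2 (q + 1)) =
        (p + 1 + (q + 1)) * (n.choose ij.1 *
            (stirlingSecond ij.1 (p + 1) * stirlingSecond ij.2 (q + 1))) +
          n.choose ij.1 * (stirlingSecond ij.1 (p + 1) * stirlingSecond ij.2 q) +
          n.choose ij.1 * (stirlingSecond ij.1 p * stirlingSecond ij.2 (q + 1)) := by
      intro ij hij
      rw [← choose_symm_of_eq_add (mem_antidiagonal.1 hij).symm, stirlingSecond_succ_succ,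
        stirlingSecond_succ_succ]
      ring
    have pascal := Finset.sum_antidiagonal_choose_succ_nsmul
      (fun i j => stirlingSecond i (p + 1) * stirlingSecond j (q + 1)) n
    simp only [smul_eq_mul] at pascal
    rw [pascal, ← sum_add_distrib, sum_congr rfl split,
      sum_add_distrib, sum_add_distrib, ← mul_sum, ih, ih, ih,
      show p + 1 + (q + 1) = p + q + 1 + 1 by omega, show p + 1 + q = p + q + 1 by omega,
      show p + (q + 1) = p + q + 1 by omega, stirlingSecond_succ_succ, choose_succ_succ' (p + q + 1)]
    ring

end Nat

theorem bell_eq_sum_range_stirlingSecond {t N : ℕ} (h : t < N) :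
    bell t = ∑ q ∈ range N, Nat.stirlingSecond t q := by
  rw [bell, stirling_eq_stirlingSecond]
  exact eventually_constant_sum (fun q hq => Nat.stirlingSecond_eq_zero_of_lt hq) h |>.symm

theorem sum_range_choose_mul_bell_mul_stirlingSecond (n m : ℕ) :
    ∑ t ∈ range (n + 1), n.choose t * bell t * Nat.stirlingSecond (n - t) m =
      ∑ q ∈ range (n + 1), (q + m).choose q * Nat.stirlingSecond n (q + m) := by
  calc _ = ∑ t ∈ range (n + 1), ∑ q ∈ range (n + 1),
        n.choose t * (Nat.stirlingSecond t q * Nat.stirlingSecond (n - t) m) := by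
        refine sum_congr rfl fun t ht => ?_
        rw [bell_eq_sum_range_stirlingSecond (mem_range.1 ht), mul_sum, sum_mul]
        simp only [mul_assoc]
    _ = _ := by
        rw [sum_comm]
        refine sum_congr rfl fun q _ => ?_
        rw [← Nat.sum_antidiagonal_choose_mul_stirlingSecond_mul_stirlingSecond,
          Finset.Nat.sum_antidiagonal_eq_sum_range_succ (fun i j =>
            n.choose i * (Nat.stirlingSecond i q * Nat.stirlingSecond j m))]

theorem bell_binomial_stirling_identity_general (r m : ℕ) :
    ∑ t ∈ Finset.range (r - m + 1), bell t * Nat.choose r t * stirling (r - t) m =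
      ∑ i ∈ Finset.Icc m r, Nat.choose i m * stirling r i := by
  rw [stirling_eq_stirlingSecond, sum_subset (range_subset_range.2 (by omega : r - m + 1 ≤ r + 1))
    fun t ht ht' => by
      rw [Nat.stirlingSecond_eq_zero_of_lt (by simp at ht ht'; omega), mul_zero]]
  simp only [mul_comm (bell _)]
  rw [sum_range_choose_mul_bell_mul_stirlingSecond, ← Ico_add_one_right_eq_Icc,
    sum_Ico_eq_sum_range,
    eventually_constant_sum (N := r + 1 - m) (n := r + 1)
      (fun q hq => by rw [Nat.stirlingSecond_eq_zero_of_lt (by omega), mul_zero]) (by omega)]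
  refine sum_congr rfl fun q _ => ?_
  rw [add_comm m q, Nat.choose_symm_add]

theorem bell_binomial_stirling_identity (r m : ℕ) (hmr : m ≤ r) :
    ∑ t ∈ Finset.range (r - m + 1), bell t * Nat.choose r t * stirling (r - t) m =
      ∑ i ∈ Finset.Icc m r, Nat.choose i m * stirling r i :=
  bell_binomial_stirling_identity_general r m
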